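/- Let n ≥ 2 and ζ transcendental real with w_{n-1}(ζ) < ŵ_n(ζ). Then every best approximation polynomial P_k associated to (n,ζ) of sufficiently large index has degree exactly n. More precisely: if deg P_k ≤ n−1 for infinitely many k, and along these indices |P_k(ζ)| ≤ H(P_{k+1})^{−ŵ_n(ζ)+ε} with H(P_{k+1}) > H(P_k), then ŵ_n(ζ) ≤ w_{n-1}(ζ), a contradiction. -/
import Mathlib


open Polynomial

/-- Naive height of an integer polynomial: maximum modulus of its coefficients. -/
def polyHeight (P : Polynomial ℤ) : ℕ := P.support.sup fun i => (P.coeff i).natAbs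

/-- `P` is a sequence of best approximation polynomials associated to `(n, ζ)`. -/
def IsBestApproxSeq (n : ℕ) (ζ : ℝ) (P : ℕ → Polynomial ℤ) : Prop :=
  (∀ k, P k ≠ 0) ∧ (∀ k, (P k).natDegree ≤ n) ∧
  (∀ k, polyHeight (P k) < polyHeight (P (k + 1))) ∧
  (∀ k, |(Polynomial.aeval ζ) (P (k + 1))| < |(Polynomial.aeval ζ) (P k)|) ∧
  (∀ k, ∀ Q : Polynomial ℤ, Q ≠ 0 → Q.natDegree ≤ n →
    polyHeight Q ≤ polyHeight (P k) →
    |(Polynomial.aeval ζ) (P k)| ≤ |(Polynomial.aeval ζ) Q|)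

/-- The set of exponents `w` admissible for the ordinary exponent `w_n(ζ)`. -/
def ordinarySet (n : ℕ) (ζ : ℝ) : Set ℝ :=
  {w | ∀ X₀ : ℝ, ∃ X : ℝ, X₀ ≤ X ∧ ∃ Q : Polynomial ℤ, Q ≠ 0 ∧ Q.natDegree ≤ n ∧
    (polyHeight Q : ℝ) ≤ X ∧ 0 < |(Polynomial.aeval ζ) Q| ∧
    |(Polynomial.aeval ζ) Q| ≤ X ^ (-w)}

/-- The set of exponents `w` admissible for the uniform exponent `ŵ_n(ζ)`. -/
def uniformSet (n : ℕ) (ζ : ℝ) : Set ℝ :=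
  {w | ∃ X₀ : ℝ, ∀ X : ℝ, X₀ ≤ X → ∃ Q : Polynomial ℤ, Q ≠ 0 ∧ Q.natDegree ≤ n ∧
    (polyHeight Q : ℝ) ≤ X ∧ 0 < |(Polynomial.aeval ζ) Q| ∧
    |(Polynomial.aeval ζ) Q| ≤ X ^ (-w)}

/-- The ordinary exponent `w_n(ζ)`. -/
noncomputable def wExp (n : ℕ) (ζ : ℝ) : ℝ := sSup (ordinarySet n ζ)

/-- The uniform exponent `ŵ_n(ζ)`. -/
noncomputable def hatwExp (n : ℕ) (ζ : ℝ) : ℝ := sSup (uniformSet n ζ)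

lemma aeval_ne_zero_of_transcendental {ζ : ℝ} (hζ : Transcendental ℚ ζ)
    {Q : Polynomial ℤ} (hQ : Q ≠ 0) : (Polynomial.aeval ζ) Q ≠ 0 := by
  intro h
  apply hζ
  refine ⟨Q.map (algebraMap ℤ ℚ), ?_, ?_⟩
  · exact (Polynomial.map_ne_zero_iff (algebraMap ℤ ℚ).injective_int).2 hQ
  · rwa [Polynomial.aeval_map_algebraMap]

theorem stmt_13 (n : ℕ) (hn : 2 ≤ n) (ζ : ℝ) (hζ : Transcendental ℚ ζ)
    (P : ℕ → Polynomial ℤ) (hP : IsBestApproxSeq n ζ P)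
    (hinf : ∀ N : ℕ, ∃ k ≥ N, (P k).natDegree ≤ n - 1)
    (hone : (ordinarySet (n - 1) ζ).Nonempty) (hobdd : BddAbove (ordinarySet (n - 1) ζ))
    (hune : (uniformSet n ζ).Nonempty) (hubdd : BddAbove (uniformSet n ζ)) :
    hatwExp n ζ ≤ wExp (n - 1) ζ := by
  have key : uniformSet n ζ ⊆ ordinarySet (n - 1) ζ := by
    rintro w ⟨X₀, hw⟩ X₀'
    set M : ℕ := ⌈max X₀ X₀'⌉₊ with hM
    obtain ⟨k, hkN, hdeg⟩ := hinf M
    have hmono : StrictMono fun k => polyHeight (P k) :=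
      strictMono_nat_of_lt_succ hP.2.2.1
    have hkH : k ≤ polyHeight (P k) := hmono.le_apply
    have hXM : (M : ℝ) ≤ (polyHeight (P k) : ℝ) := by
      exact_mod_cast le_trans hkN hkH
    have hmax : max X₀ X₀' ≤ (polyHeight (P k) : ℝ) :=
      le_trans (Nat.le_ceil _) hXM
    set X : ℝ := (polyHeight (P k) : ℝ)
    obtain ⟨Q, hQ0, hQdeg, hQH, hQpos, hQle⟩ := hw X (le_trans (le_max_left _ _) hmax)
    have hQH' : polyHeight Q ≤ polyHeight (P k) := Nat.cast_le.mp hQH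
    have hmin : |(Polynomial.aeval ζ) (P k)| ≤ |(Polynomial.aeval ζ) Q| :=
      hP.2.2.2.2 k Q hQ0 hQdeg hQH'
    have hpos : 0 < |(Polynomial.aeval ζ) (P k)| :=
      abs_pos.2 (aeval_ne_zero_of_transcendental hζ (hP.1 k))
    exact ⟨X, le_trans (le_max_right _ _) hmax, P k, hP.1 k, hdeg, le_refl _,
      hpos, le_trans hmin hQle⟩
  exact csSup_le_csSup hobdd hune key
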